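/- In the two-seller sequential-search demand system, the bonus is strictly decreasing in the reservation value A (equivalently, strictly increasing in the search cost s): if f > 0 on (0,1) and 0 < A₁ < A₂ ≤ 1 with max(p_i, p_j) ≤ A₁ and |p_i − p_j| ≤ 1 − A₂, then B_i evaluated at reservation value A₂ is strictly smaller than B_i evaluated at reservation value A₁. -/

import Mathlib

open MeasureTheory

/-- The CDF associated to density `f` supported on `[0,1]`. -/
noncomputable def cdf (f : ℝ → ℝ) (x : ℝ) : ℝ := ∫ u in (0:ℝ)..x, f u

/-- Seller i's bonus `B_i = D_i¹ - D_i²`, viewed as a function of the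
reservation value `A` with the prices `pi, pj` fixed. -/
noncomputable def bonusI (f : ℝ → ℝ) (pi pj A : ℝ) : ℝ :=
  (1 - cdf f (A + (pi - pj)) + ∫ u in pj..A, cdf f u * f (u + (pi - pj)))
    - ((1 - cdf f A) * cdf f (A - (pi - pj))
        + ∫ u in pj..(A - (pi - pj)), cdf f u * f (u + (pi - pj)))

/-!
By the fundamental theorem of calculus the terms `F(A) f(A + Δp)` and `F(A - Δp) f(A)` cancel and
`B_i'(A) = -(1 - F(A)) (f(A + Δp) + f(A - Δp))`, where `Δp = p_i - p_j`. On `(A₁, A₂)` the first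
factor is `∫_A^1 f > 0`, and the second is at least `f(A + |Δp|) > 0` since `f ≥ 0` and
`A + |Δp| < A₂ + (1 - A₂) = 1`.
-/

open Set

variable {f : ℝ → ℝ}

theorem hasDerivAt_cdf (hf : Continuous f) (x : ℝ) : HasDerivAt (cdf f) (f x) x :=
  (hf.integral_hasStrictDerivAt 0 x).hasDerivAt

theorem continuous_cdf (hf : Continuous f) : Continuous (cdf f) :=
  continuous_iff_continuousAt.2 fun x => (hasDerivAt_cdf hf x).continuousAt

theorem hasDerivAt_bonusI (hf : Continuous f) (pi pj A : ℝ) :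
    HasDerivAt (bonusI f pi pj)
      (-((1 - cdf f A) * (f (A + (pi - pj)) + f (A - (pi - pj))))) A := by
  set Δ := pi - pj
  have hg : Continuous fun u => cdf f u * f (u + Δ) :=
    (continuous_cdf hf).mul (hf.comp (continuous_add_const Δ))
  have h := (((hasDerivAt_const A (1 : ℝ)).sub ((hasDerivAt_cdf hf _).comp_add_const A Δ)).add
      (hg.integral_hasStrictDerivAt pj A).hasDerivAt).sub
    ((((hasDerivAt_const A (1 : ℝ)).sub (hasDerivAt_cdf hf A)).mul
      ((hasDerivAt_cdf hf _).comp_sub_const A Δ)).add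
      ((hg.integral_hasStrictDerivAt pj (A - Δ)).hasDerivAt.comp_sub_const A Δ))
  refine h.congr_deriv ?_
  simp only [Pi.sub_apply, sub_add_cancel]
  ring

theorem cdf_lt_one (hf : Continuous f) (h_total : ∫ u in (0 : ℝ)..1, f u = 1)
    (h_pos : ∀ x, 0 < x → x < 1 → 0 < f x) {x : ℝ} (hx₀ : 0 ≤ x) (hx₁ : x < 1) :
    cdf f x < 1 := by
  have htail : 0 < ∫ u in x..1, f u :=
    intervalIntegral.intervalIntegral_pos_of_pos_on (hf.intervalIntegrable x 1)
      (fun t ht => h_pos t (hx₀.trans_lt ht.1) ht.2) hx₁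
  have hsplit := intervalIntegral.integral_add_adjacent_intervals
    (hf.intervalIntegrable (μ := volume) 0 x) (hf.intervalIntegrable x 1)
  rw [h_total] at hsplit
  unfold cdf
  linarith

theorem apply_add_add_apply_sub_pos (h_nonneg : ∀ x, 0 ≤ f x)
    (h_pos : ∀ x, 0 < x → x < 1 → 0 < f x) {x d : ℝ} (hx : 0 < x) (hxd : x + |d| < 1) :
    0 < f (x + d) + f (x - d) := by
  rcases abs_cases d with ⟨hd, hd₀⟩ | ⟨hd, hd₀⟩ <;> rw [hd] at hxd
  · linarith [h_pos (x + d) (by linarith) hxd, h_nonneg (x - d)]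
  · linarith [h_pos (x - d) (by linarith) (by linarith), h_nonneg (x + d)]

theorem bonus_strict_anti_in_A_general
    (f : ℝ → ℝ) (hf_cont : Continuous f) (hf_nonneg : ∀ x, 0 ≤ f x)
    (hf_total : (∫ u in (0:ℝ)..1, f u) = 1)
    (hf_pos : ∀ x, 0 < x → x < 1 → 0 < f x)
    (pi pj A₁ A₂ : ℝ)
    (hA₁ : 0 < A₁) (hA₁₂ : A₁ < A₂) (hA₂ : A₂ ≤ 1)
    (hgap : |pi - pj| ≤ 1 - A₂) :
    bonusI f pi pj A₂ < bonusI f pi pj A₁ := by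
  have hB := hasDerivAt_bonusI hf_cont pi pj
  have hanti : StrictAntiOn (bonusI f pi pj) (Icc A₁ A₂) := by
    refine strictAntiOn_of_hasDerivWithinAt_neg (convex_Icc A₁ A₂)
      (fun x _ => (hB x).continuousAt.continuousWithinAt)
      (fun x _ => (hB x).hasDerivWithinAt) ?_
    rw [interior_Icc]
    rintro x ⟨hx₁, hx₂⟩
    have hx₀ : 0 < x := hA₁.trans hx₁
    exact neg_neg_of_pos <| mul_pos
      (sub_pos.2 <| cdf_lt_one hf_cont hf_total hf_pos hx₀.le (by linarith))
      (apply_add_add_apply_sub_pos hf_nonneg hf_pos hx₀ (by linarith))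
  exact hanti (left_mem_Icc.2 hA₁₂.le) (right_mem_Icc.2 hA₁₂.le) hA₁₂

/-- The bonus is strictly decreasing in the reservation value `A`
(equivalently, strictly increasing in the search cost `s`). -/
theorem bonus_strict_anti_in_A
    (f : ℝ → ℝ) (hf_cont : Continuous f) (hf_nonneg : ∀ x, 0 ≤ f x)
    (hf_supp : ∀ x, x < 0 ∨ 1 < x → f x = 0)
    (hf_total : (∫ u in (0:ℝ)..1, f u) = 1)
    (hf_pos : ∀ x, 0 < x → x < 1 → 0 < f x)
    (pi pj A₁ A₂ : ℝ) (hpi : 0 ≤ pi) (hpj : 0 ≤ pj)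
    (hA₁ : 0 < A₁) (hA₁₂ : A₁ < A₂) (hA₂ : A₂ ≤ 1)
    (hmax : max pi pj ≤ A₁) (hgap : |pi - pj| ≤ 1 - A₂) :
    bonusI f pi pj A₂ < bonusI f pi pj A₁ :=
  bonus_strict_anti_in_A_general f hf_cont hf_nonneg hf_total hf_pos pi pj A₁ A₂ hA₁ hA₁₂ hA₂ hgap
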